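/- arXiv:2212.01123 — 4 statements merged into one kernel-verified Lean document; each statement's English description precedes it below -/
import Mathlib

section
/- For all X, Y, Z ∈ V the torsion tensor T of the quarter-symmetric metric A-connection satisfies the three identities: (i) A(T(AX,AY)) = A(T(X,Y)) − T(AX,Y) − T(X,AY); (ii) T(X,Y,Z) = T(AX,AY,Z) + T(AX,Y,AZ) + T(X,AY,AZ); (iii) the cyclic sum over (X,Y,Z) of T(X,Y,Z) equals the cyclic sum over (X,Y,Z) of T(AX,Y,AZ) + T(X,AY,AZ). -/
/-!
With `F(X,Z) = ⟨AX,Z⟩` one has `T(X,Y,Z) = π(Y)F(X,Z) − π(X)F(Y,Z)`, and `A² = −id` together with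
the `A`-invariance of the metric give `F(AX,Z) = −⟨X,Z⟩`, `F(X,AZ) = ⟨X,Z⟩`, `F(AX,AZ) = F(X,Z)`.
Identities (i) and (ii) follow by expanding. By (ii), identity (iii) is equivalent to the vanishing
of the cyclic sum of `T(AX,AY,Z) = π(AX)⟨Y,Z⟩ − π(AY)⟨X,Z⟩`, which holds because the inner product
is symmetric.
-/

open RealInnerProductSpace

noncomputable section

variable {V : Type*} [NormedAddCommGroup V] [InnerProductSpace ℝ V] [FiniteDimensional ℝ V]

/-- The torsion tensor of the quarter-symmetric metric `A`-connection:
`T(X,Y) = π(Y)·AX - π(X)·AY`. -/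
def Tor (A : V →ₗ[ℝ] V) (p : V →ₗ[ℝ] ℝ) (X Y : V) : V := p Y • A X - p X • A Y

/-- The `(0,3)` torsion tensor `T(X,Y,Z) = ⟨T(X,Y), Z⟩`. -/
def Tor3 (A : V →ₗ[ℝ] V) (p : V →ₗ[ℝ] ℝ) (X Y Z : V) : ℝ := ⟪Tor A p X Y, Z⟫

section

variable {E : Type*} [NormedAddCommGroup E] [InnerProductSpace ℝ E]
  {A : E →ₗ[ℝ] E} (p : E →ₗ[ℝ] ℝ)

theorem inner_apply_right_eq_neg (hA2 : ∀ X : E, A (A X) = -X)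
    (hAinner : ∀ X Y : E, ⟪A X, A Y⟫ = ⟪X, Y⟫) (X Z : E) : ⟪X, A Z⟫ = -⟪A X, Z⟫ := by
  rw [← hAinner X (A Z), hA2, inner_neg_right]

theorem tor3_eq (X Y Z : E) :
    Tor3 A p X Y Z = p Y * ⟪A X, Z⟫ - p X * ⟪A Y, Z⟫ := by
  simp only [Tor3, Tor, inner_sub_left, real_inner_smul_left]

theorem apply_tor_apply_apply (hA2 : ∀ X : E, A (A X) = -X) (X Y : E) :
    A (Tor A p (A X) (A Y)) = A (Tor A p X Y) - Tor A p (A X) Y - Tor A p X (A Y) := by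
  simp only [Tor, map_sub, map_smul, map_neg, hA2]
  module

theorem tor3_apply_apply_left (hA2 : ∀ X : E, A (A X) = -X) (X Y Z : E) :
    Tor3 A p (A X) (A Y) Z = p (A X) * ⟪Y, Z⟫ - p (A Y) * ⟪X, Z⟫ := by
  simp only [tor3_eq, hA2, inner_neg_left]
  ring

theorem tor3_apply_apply_left_add_cyclic (hA2 : ∀ X : E, A (A X) = -X) (X Y Z : E) :
    Tor3 A p (A X) (A Y) Z + Tor3 A p (A Y) (A Z) X + Tor3 A p (A Z) (A X) Y = 0 := by
  simp only [tor3_apply_apply_left p hA2]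
  rw [real_inner_comm X Z, real_inner_comm Z Y, real_inner_comm Y X]
  ring

theorem tor3_eq_sum_apply_apply (hA2 : ∀ X : E, A (A X) = -X)
    (hAinner : ∀ X Y : E, ⟪A X, A Y⟫ = ⟪X, Y⟫) (X Y Z : E) :
    Tor3 A p X Y Z
      = Tor3 A p (A X) (A Y) Z + Tor3 A p (A X) Y (A Z) + Tor3 A p X (A Y) (A Z) := by
  simp only [tor3_eq, hA2, map_neg, inner_neg_left, hAinner, inner_apply_right_eq_neg hA2 hAinner]
  ring

theorem tor3_add_cyclic (hA2 : ∀ X : E, A (A X) = -X)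
    (hAinner : ∀ X Y : E, ⟪A X, A Y⟫ = ⟪X, Y⟫) (X Y Z : E) :
    Tor3 A p X Y Z + Tor3 A p Y Z X + Tor3 A p Z X Y
      = (Tor3 A p (A X) Y (A Z) + Tor3 A p X (A Y) (A Z))
        + (Tor3 A p (A Y) Z (A X) + Tor3 A p Y (A Z) (A X))
        + (Tor3 A p (A Z) X (A Y) + Tor3 A p Z (A X) (A Y)) := by
  have hcyc := tor3_apply_apply_left_add_cyclic p hA2 X Y Z
  rw [tor3_eq_sum_apply_apply p hA2 hAinner X Y Z, tor3_eq_sum_apply_apply p hA2 hAinner Y Z X,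
    tor3_eq_sum_apply_apply p hA2 hAinner Z X Y]
  linarith

end

theorem statement0_general
    (A : V →ₗ[ℝ] V) (hA2 : ∀ X : V, A (A X) = -X)
    (hAinner : ∀ X Y : V, ⟪A X, A Y⟫ = ⟪X, Y⟫) (p : V →ₗ[ℝ] ℝ) :
    ∀ X Y Z : V,
      (A (Tor A p (A X) (A Y)) = A (Tor A p X Y) - Tor A p (A X) Y - Tor A p X (A Y)) ∧
      (Tor3 A p X Y Z
        = Tor3 A p (A X) (A Y) Z + Tor3 A p (A X) Y (A Z) + Tor3 A p X (A Y) (A Z)) ∧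
      (Tor3 A p X Y Z + Tor3 A p Y Z X + Tor3 A p Z X Y
        = (Tor3 A p (A X) Y (A Z) + Tor3 A p X (A Y) (A Z))
          + (Tor3 A p (A Y) Z (A X) + Tor3 A p Y (A Z) (A X))
          + (Tor3 A p (A Z) X (A Y) + Tor3 A p Z (A X) (A Y))) := fun X Y Z =>
  ⟨apply_tor_apply_apply p hA2 X Y, tor3_eq_sum_apply_apply p hA2 hAinner X Y Z,
    tor3_add_cyclic p hA2 hAinner X Y Z⟩

theorem statement0 (hdim_even : Even (Module.finrank ℝ V)) (hdim4 : 4 ≤ Module.finrank ℝ V)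
    (A : V →ₗ[ℝ] V) (hA2 : ∀ X : V, A (A X) = -X)
    (hAinner : ∀ X Y : V, ⟪A X, A Y⟫ = ⟪X, Y⟫) (p : V →ₗ[ℝ] ℝ) :
    ∀ X Y Z : V,
      (A (Tor A p (A X) (A Y)) = A (Tor A p X Y) - Tor A p (A X) Y - Tor A p X (A Y)) ∧
      (Tor3 A p X Y Z
        = Tor3 A p (A X) (A Y) Z + Tor3 A p (A X) Y (A Z) + Tor3 A p X (A Y) (A Z)) ∧
      (Tor3 A p X Y Z + Tor3 A p Y Z X + Tor3 A p Z X Y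
        = (Tor3 A p (A X) Y (A Z) + Tor3 A p X (A Y) (A Z))
          + (Tor3 A p (A Y) Z (A X) + Tor3 A p Y (A Z) (A X))
          + (Tor3 A p (A Z) X (A Y) + Tor3 A p Z (A X) (A Y))) :=
  statement0_general A hA2 hAinner p
end
end

section
/- Assume Ric_g is symmetric. Then for all X, Y, Z ∈ V the identity 4·H⁰(X,Y)Z − 2·H¹(X,Y)Z − H²(X,Y)Z = W(X,Y)Z holds, where W(X,Y)Z := Rg(X,Y)Z + (1/(n−1))(Ric_g(X,Z)·Y − Ric_g(Y,Z)·X) is the Weyl projective curvature tensor. -/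
open RealInnerProductSpace

noncomputable section

variable {V : Type*} [NormedAddCommGroup V] [InnerProductSpace ℝ V] [FiniteDimensional ℝ V]

/-- Ricci-type contraction in the first argument: `ric t Y Z = trace (X ↦ t X Y Z)`. -/
def ric (t : V →ₗ[ℝ] V →ₗ[ℝ] V →ₗ[ℝ] V) (Y Z : V) : ℝ :=
  LinearMap.trace ℝ V ((t.flip Y).flip Z)

/-- Contraction in the third argument: `rp t X Y = trace (Z ↦ t X Y Z)`. -/
def rp (t : V →ₗ[ℝ] V →ₗ[ℝ] V →ₗ[ℝ] V) (X Y : V) : ℝ :=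
  LinearMap.trace ℝ V (t X Y)

/-- The generator-independent tensor `H⁰`. -/
def H0 (n : ℕ) (A : V →ₗ[ℝ] V) (Rg : V →ₗ[ℝ] V →ₗ[ℝ] V →ₗ[ℝ] V) (X Y Z : V) : V :=
  Rg X Y Z + (1/(4*((n : ℝ) - 1))) • (ric Rg X Z • Y - ric Rg Y Z • X)
    + (1/4 : ℝ) • ((2 * ric Rg (A X) Y) • A Z + ric Rg (A X) Z • A Y - ric Rg (A Y) Z • A X)

/-- The generator-independent tensor `H¹`. -/
def H1 (A : V →ₗ[ℝ] V) (Rg : V →ₗ[ℝ] V →ₗ[ℝ] V →ₗ[ℝ] V) (X Y Z : V) : V :=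
  Rg X Y Z + ric Rg Y (A X) • A Z

/-- The generator-independent tensor `H²`. -/
def H2 (A : V →ₗ[ℝ] V) (Rg : V →ₗ[ℝ] V →ₗ[ℝ] V →ₗ[ℝ] V) (X Y Z : V) : V :=
  Rg X Y Z + ric Rg (A X) Z • A Y - ric Rg (A Y) Z • A X

/-- The generator-independent tensor `H⁵`. -/
def H5 (n : ℕ) (A : V →ₗ[ℝ] V) (Rg : V →ₗ[ℝ] V →ₗ[ℝ] V →ₗ[ℝ] V) (X Y Z : V) : V :=
  Rg X Y Z + (1/(2*((n : ℝ) - 1))) • (ric Rg X Y • Z - ric Rg Y Z • X)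
    + (1/2 : ℝ) • (ric Rg (A X) Y • A Z - ric Rg (A Y) Z • A X)

/-- The Weyl projective curvature tensor `W`. -/
def Wt (n : ℕ) (Rg : V →ₗ[ℝ] V →ₗ[ℝ] V →ₗ[ℝ] V) (X Y Z : V) : V :=
  Rg X Y Z + (1/((n : ℝ) - 1)) • (ric Rg X Z • Y - ric Rg Y Z • X)

/-- The holomorphically projective curvature tensor `P`. -/
def Pt (n : ℕ) (A : V →ₗ[ℝ] V) (Rg : V →ₗ[ℝ] V →ₗ[ℝ] V →ₗ[ℝ] V) (X Y Z : V) : V :=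
  Rg X Y Z + (1/((n : ℝ) + 2)) • (ric Rg X Z • Y - ric Rg Y Z • X)
    - (1/((n : ℝ) + 2)) • (ric Rg X (A Z) • A Y - ric Rg Y (A Z) • A X
        + (2 * ric Rg X (A Y)) • A Z)

omit [FiniteDimensional ℝ V] in
theorem four_smul_H0 (n : ℕ) (A : V →ₗ[ℝ] V) (Rg : V →ₗ[ℝ] V →ₗ[ℝ] V →ₗ[ℝ] V) (X Y Z : V) :
    (4 : ℝ) • H0 n A Rg X Y Z
      = Wt n Rg X Y Z + (2 : ℝ) • (Rg X Y Z + ric Rg (A X) Y • A Z) + H2 A Rg X Y Z := by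
  have hcoeff : (4 : ℝ) * (1 / (4 * ((n : ℝ) - 1))) = 1 / ((n : ℝ) - 1) := by
    rw [mul_one_div, div_mul_cancel_left₀ four_ne_zero, one_div]
  rw [H0, Wt, H2, smul_add, smul_add, smul_smul, hcoeff]
  module

omit [FiniteDimensional ℝ V] in
theorem H1_eq_of_ric_symm (A : V →ₗ[ℝ] V) {Rg : V →ₗ[ℝ] V →ₗ[ℝ] V →ₗ[ℝ] V}
    (hsym : ∀ X Y : V, ric Rg X Y = ric Rg Y X) (X Y Z : V) :
    H1 A Rg X Y Z = Rg X Y Z + ric Rg (A X) Y • A Z := by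
  rw [H1, hsym]

theorem statement16_general (n : ℕ)
    (A : V →ₗ[ℝ] V) (Rg : V →ₗ[ℝ] V →ₗ[ℝ] V →ₗ[ℝ] V)
    (hsym : ∀ X Y : V, ric Rg X Y = ric Rg Y X) :
    ∀ X Y Z : V,
      (4 : ℝ) • H0 n A Rg X Y Z - (2 : ℝ) • H1 A Rg X Y Z - H2 A Rg X Y Z
        = Wt n Rg X Y Z := by
  intro X Y Z
  rw [four_smul_H0, H1_eq_of_ric_symm A hsym]
  abel

theorem statement16 (n : ℕ) (hn : Module.finrank ℝ V = n) (hn_even : Even n) (hn4 : 4 ≤ n)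
    (A : V →ₗ[ℝ] V) (hA2 : ∀ X : V, A (A X) = -X)
    (hAinner : ∀ X Y : V, ⟪A X, A Y⟫ = ⟪X, Y⟫) (Rg : V →ₗ[ℝ] V →ₗ[ℝ] V →ₗ[ℝ] V)
    (hsym : ∀ X Y : V, ric Rg X Y = ric Rg Y X) :
    ∀ X Y Z : V,
      (4 : ℝ) • H0 n A Rg X Y Z - (2 : ℝ) • H1 A Rg X Y Z - H2 A Rg X Y Z
        = Wt n Rg X Y Z :=
  statement16_general n A Rg hsym
end
end

section
/- Assume Rg is skew-symmetric in its first two arguments (Rg(X,Y)Z = −Rg(Y,X)Z), satisfies the first Bianchi identity (Rg(X,Y)Z + Rg(Y,Z)X + Rg(Z,X)Y = 0), and that Ric_g is symmetric. Then for all X, Y, Z ∈ V: 2·H⁵(X,Y)Z − H¹(X,Y)Z + H¹(Y,Z)X = W(X,Z)Y, where W(X,Y)Z := Rg(X,Y)Z + (1/(n−1))(Ric_g(X,Z)·Y − Ric_g(Y,Z)·X) is the Weyl projective curvature tensor. -/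
open RealInnerProductSpace

noncomputable section

variable {V : Type*} [NormedAddCommGroup V] [InnerProductSpace ℝ V] [FiniteDimensional ℝ V]

theorem add_add_eq_of_skew_of_bianchi {M : Type*} [AddCommGroup M] (R : M → M → M → M)
    (hskew : ∀ X Y Z, R X Y Z = -R Y X Z)
    (hbianchi : ∀ X Y Z, R X Y Z + R Y Z X + R Z X Y = 0) (X Y Z : M) :
    R X Y Z + R Y Z X = R X Z Y := by
  rw [← sub_eq_zero, ← hbianchi X Y Z, hskew Z X Y, hskew X Z Y]
  abel

theorem statement17_general (n : ℕ)
    (A : V →ₗ[ℝ] V) (Rg : V →ₗ[ℝ] V →ₗ[ℝ] V →ₗ[ℝ] V)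
    (hskew : ∀ X Y Z : V, Rg X Y Z = - Rg Y X Z)
    (hbianchi : ∀ X Y Z : V, Rg X Y Z + Rg Y Z X + Rg Z X Y = 0)
    (hsym : ∀ X Y : V, ric Rg X Y = ric Rg Y X) :
    ∀ X Y Z : V,
      (2 : ℝ) • H5 n A Rg X Y Z - H1 A Rg X Y Z + H1 A Rg Y Z X = Wt n Rg X Z Y := by
  intro X Y Z
  have hcurv := add_add_eq_of_skew_of_bianchi (fun X Y Z ↦ Rg X Y Z) hskew hbianchi X Y Z
  have hhalf : (1 : ℝ) / (2 * ((n : ℝ) - 1)) = 1 / 2 * (1 / ((n : ℝ) - 1)) :=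
    (one_div_mul_one_div _ _).symm
  -- The `A`-terms cancel by symmetry of `Ric`; the curvature terms add up to `Rg X Z Y`.
  simp only [H5, H1, Wt, hsym Y (A X), hsym Z (A Y), hsym Z Y, hhalf]
  linear_combination (norm := module) hcurv

theorem statement17 (n : ℕ) (hn : Module.finrank ℝ V = n) (hn_even : Even n) (hn4 : 4 ≤ n)
    (A : V →ₗ[ℝ] V) (hA2 : ∀ X : V, A (A X) = -X)
    (hAinner : ∀ X Y : V, ⟪A X, A Y⟫ = ⟪X, Y⟫) (Rg : V →ₗ[ℝ] V →ₗ[ℝ] V →ₗ[ℝ] V)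
    (hskew : ∀ X Y Z : V, Rg X Y Z = - Rg Y X Z)
    (hbianchi : ∀ X Y Z : V, Rg X Y Z + Rg Y Z X + Rg Z X Y = 0)
    (hsym : ∀ X Y : V, ric Rg X Y = ric Rg Y X) :
    ∀ X Y Z : V,
      (2 : ℝ) • H5 n A Rg X Y Z - H1 A Rg X Y Z + H1 A Rg Y Z X = Wt n Rg X Z Y :=
  statement17_general n A Rg hskew hbianchi hsym
end
end

section
/- Assume Ric_g is hybrid, i.e. Ric_g(X,AY) = −Ric_g(AX,Y) for all X, Y ∈ V. If H⁰(X,Y)Z = 0 for all X, Y, Z ∈ V, then the holomorphically projective curvature tensor and the Weyl projective curvature tensor satisfy P(X,Y)Z = ((n−2)/(n+2))·W(X,Y)Z for all X, Y, Z ∈ V. -/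
open RealInnerProductSpace

noncomputable section

variable {V : Type*} [NormedAddCommGroup V] [InnerProductSpace ℝ V] [FiniteDimensional ℝ V]

/- For a hybrid Ricci tensor the `A`-twisted Ricci terms of `P` turn into those of `H⁰`, and then
`P - ((n-2)/(n+2)) W = (4/(n+2)) H⁰` coefficientwise: `1 - (n-2)/(n+2) = 4/(n+2)` for `Rg`, and
`1/(n+2) - (n-2)/((n+2)(n-1)) = 1/((n+2)(n-1))` for the Weyl terms. -/

omit [FiniteDimensional ℝ V] in
theorem Pt_sub_smul_Wt_eq_smul_H0 {n : ℕ} (hn : (n : ℝ) - 1 ≠ 0) (A : V →ₗ[ℝ] V)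
    (Rg : V →ₗ[ℝ] V →ₗ[ℝ] V →ₗ[ℝ] V) (hhyb : ∀ X Y : V, ric Rg X (A Y) = - ric Rg (A X) Y)
    (X Y Z : V) :
    Pt n A Rg X Y Z - (((n : ℝ) - 2) / ((n : ℝ) + 2)) • Wt n Rg X Y Z
      = (4 / ((n : ℝ) + 2)) • H0 n A Rg X Y Z := by
  have hn2 : (n : ℝ) + 2 ≠ 0 := by positivity
  simp only [Pt, Wt, H0, hhyb]
  match_scalars <;> field_simp <;> ring

theorem statement18_general (n : ℕ) (hn4 : 4 ≤ n)
    (A : V →ₗ[ℝ] V) (Rg : V →ₗ[ℝ] V →ₗ[ℝ] V →ₗ[ℝ] V)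
    (hhyb : ∀ X Y : V, ric Rg X (A Y) = - ric Rg (A X) Y)
    (hH0 : ∀ X Y Z : V, H0 n A Rg X Y Z = 0) :
    ∀ X Y Z : V,
      Pt n A Rg X Y Z = (((n : ℝ) - 2)/((n : ℝ) + 2)) • Wt n Rg X Y Z := by
  intro X Y Z
  have hn : (n : ℝ) - 1 ≠ 0 := by
    have : (4 : ℝ) ≤ n := by exact_mod_cast hn4
    linarith
  rw [← sub_eq_zero, Pt_sub_smul_Wt_eq_smul_H0 hn A Rg hhyb, hH0, smul_zero]

theorem statement18 (n : ℕ) (hn : Module.finrank ℝ V = n) (hn_even : Even n) (hn4 : 4 ≤ n)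
    (A : V →ₗ[ℝ] V) (hA2 : ∀ X : V, A (A X) = -X)
    (hAinner : ∀ X Y : V, ⟪A X, A Y⟫ = ⟪X, Y⟫) (Rg : V →ₗ[ℝ] V →ₗ[ℝ] V →ₗ[ℝ] V)
    (hhyb : ∀ X Y : V, ric Rg X (A Y) = - ric Rg (A X) Y)
    (hH0 : ∀ X Y Z : V, H0 n A Rg X Y Z = 0) :
    ∀ X Y Z : V,
      Pt n A Rg X Y Z = (((n : ℝ) - 2)/((n : ℝ) + 2)) • Wt n Rg X Y Z :=
  statement18_general n hn4 A Rg hhyb hH0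
end
end
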